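/- Fix an integer k ≥ 1 and integers j_1 > j_2 > … > j_k > 0. Define φ(x_1,…,x_k) = 2^{k/2} · det( sin(π j_p x_q) )_{1≤p,q≤k} and λ = 1/( π^{2k} j_1² j_2² ⋯ j_k² ). Then for all real numbers 0 ≤ x_1 ≤ x_2 ≤ … ≤ x_k ≤ 1, the iterated integral ∫_{y_1=0}^{x_1} ∫_{y_2=x_1}^{x_2} ⋯ ∫_{y_k=x_{k−1}}^{x_k} ∫_{y_{k+1}=x_k}^{1} [ ∫_{t_1=y_1}^{y_2} ∫_{t_2=y_2}^{y_3} ⋯ ∫_{t_k=y_k}^{y_{k+1}} φ(t_1,…,t_k) dt_k ⋯ dt_1 ] dy_{k+1} ⋯ dy_1 equals λ · φ(x_1,…,x_k). -/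

import Mathlib

/-!
Column `q` of the sine matrix depends only on `t_q`, so both integrations act on the
determinant entrywise. Integrating `sin (c t)` over the consecutive intervals `[y_q, y_{q+1}]`
gives consecutive differences of `-cos (c t) / c`, i.e. (after bordering with a row of ones) a
`(k+1) × (k+1)` determinant in `y`. Integrating that over `[w_q, w_{q+1}]` with
`w = (0, x_1, …, x_k, 1)` gives consecutive differences of `-sin (c t) / c²`, which telescope
by column operations. Since `sin (π j) = 0`, the last column becomes `(1, 0, …, 0)`, and
expanding along it leaves `φ(x) ∏ (π j_p)⁻²`.
-/

open MeasureTheory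

/-- The eigenfunction `φ_{j_1,…,j_k}(x) = 2^{k/2} det( sin(π j_p x_q) )_{p,q}`
of the `(2k+1)`-strip transfer operator. -/
noncomputable def phiSin (k : ℕ) (jj : Fin k → ℕ) (x : Fin k → ℝ) : ℝ :=
  Real.sqrt 2 ^ k *
    Matrix.det (Matrix.of fun p q : Fin k => Real.sin (Real.pi * (jj p : ℝ) * x q))

open Matrix Set

section Determinants

variable {R : Type*} [CommRing R]

theorem Matrix.det_eq_det_sub_of_row_zero_eq_one {n : ℕ}
    (M : Matrix (Fin (n + 1)) (Fin (n + 1)) R) (hM : ∀ q, M 0 q = 1) :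
    M.det = (of fun p q : Fin n => M p.succ q.succ - M p.succ q.castSucc).det := by
  rw [det_eq_of_forall_col_eq_smul_add_pred (A := M) (B := of fun p q =>
      Fin.cases (M p 0) (fun q => M p q.succ - M p q.castSucc) q) (fun _ => 1)
      (fun _ => rfl) (fun _ _ => by simp), det_succ_row_zero, Fin.sum_univ_succ]
  simp [hM]
  rfl

theorem Matrix.det_sub_castSucc_of_col_zero_eq_zero {n : ℕ}
    (U : Matrix (Fin (n + 1)) (Fin (n + 2)) R) (hU : ∀ p, U p 0 = 0) :
    (of fun p q : Fin (n + 1) => U p q.succ - U p q.castSucc).det =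
      (of fun p q : Fin (n + 1) => U p q.succ).det :=
  (det_eq_of_forall_col_eq_smul_add_pred (fun _ => 1) (fun p => by simp [hU])
    fun _ _ => by simp).symm

theorem Matrix.det_eq_of_col_last_succ_eq_zero {n : ℕ}
    (M : Matrix (Fin (n + 1)) (Fin (n + 1)) R) (hM : ∀ p : Fin n, M p.succ (Fin.last n) = 0) :
    M.det = (-1) ^ n * M 0 (Fin.last n) * (M.submatrix Fin.succ Fin.castSucc).det := by
  rw [det_succ_column M (Fin.last n), Fin.sum_univ_succ]
  simp [hM, Fin.succAbove_zero]

end Determinants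

namespace Fin

variable {α : Type*} {k : ℕ}

theorem cons_snoc_succ (x : Fin k → α) (a b : α) (q : Fin (k + 1)) :
    (cons a (snoc x b : Fin (k + 1) → α) : Fin (k + 2) → α) q.succ =
      if h : (q : ℕ) = k then b else x ⟨q, by omega⟩ := by
  simp only [cons_succ, snoc, cast_eq]
  split_ifs <;> first | rfl | omega

theorem cons_snoc_castSucc (x : Fin k → α) (a b : α) (q : Fin (k + 1)) :
    (cons a (snoc x b : Fin (k + 1) → α) : Fin (k + 2) → α) q.castSucc =
      if h : (q : ℕ) = 0 then a else x ⟨q - 1, by omega⟩ := by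
  cases q using Fin.cases with
  | zero => rfl
  | succ q => simp [snoc]

theorem monotone_cons_snoc [Preorder α] {x : Fin k → α} (hx : Monotone x) {a b : α}
    (hab : a ≤ b) (hax : ∀ q, a ≤ x q) (hxb : ∀ q, x q ≤ b) :
    Monotone (cons a (snoc x b : Fin (k + 1) → α) : Fin (k + 2) → α) := by
  refine monotone_iff_le_succ.2 fun q => ?_
  rw [cons_snoc_castSucc, cons_snoc_succ]
  split_ifs
  · exact hab
  · exact hax _
  · exact hxb _
  · exact hx (mk_le_mk.2 (by omega))

end Fin

theorem MeasureTheory.setIntegral_univ_pi_det {ι α : Type*} [Fintype ι] [DecidableEq ι]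
    [MeasurableSpace α] (μ : Measure α) [SigmaFinite μ] (s : ι → Set α)
    (f : ι → ι → α → ℝ) (hf : ∀ p q, IntegrableOn (f p q) (s q) μ) :
    ∫ t in univ.pi s, (of fun p q => f p q (t q)).det ∂(Measure.pi fun _ => μ) =
      (of fun p q => ∫ t in s q, f p q t ∂μ).det := by
  simp only [det_apply', of_apply]
  rw [Measure.restrict_pi_pi, integral_finsetSum _ fun σ _ =>
    (Integrable.fintype_prod fun i => (hf (σ i) i).integrable).const_mul _]
  refine Finset.sum_congr rfl fun σ _ => ?_
  rw [integral_const_mul, integral_fintype_prod_eq_prod (fun i t => f (σ i) i t)]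

theorem integral_Icc_eq_sub_of_hasDerivAt {f F : ℝ → ℝ} {a b : ℝ} (hab : a ≤ b)
    (hF : ∀ t ∈ Icc a b, HasDerivAt F (f t) t) (hf : IntegrableOn f (Icc a b)) :
    ∫ t in Icc a b, f t = F b - F a := by
  rw [integral_Icc_eq_integral_Ioc, ← intervalIntegral.integral_of_le hab]
  exact intervalIntegral.integral_eq_sub_of_hasDerivAt (by rwa [uIcc_of_le hab])
    ((intervalIntegrable_iff_integrableOn_Icc_of_le hab).2 hf)

def chainBox {n : ℕ} (y : Fin (n + 1) → ℝ) : Set (Fin n → ℝ) :=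
  univ.pi fun q => Icc (y q.castSucc) (y q.succ)

theorem measurableSet_chainBox {n : ℕ} (y : Fin (n + 1) → ℝ) : MeasurableSet (chainBox y) :=
  .univ_pi fun _ => measurableSet_Icc

theorem integral_chainBox_det {n : ℕ} {f F : Fin n → ℝ → ℝ} (hf : ∀ p, Continuous (f p))
    (hF : ∀ p t, HasDerivAt (F p) (f p t) t) {y : Fin (n + 1) → ℝ} (hy : Monotone y) :
    ∫ t in chainBox y, (of fun p q => f p (t q)).det =
      (of fun p q => F p (y q.succ) - F p (y q.castSucc)).det := by
  rw [chainBox, volume_pi, setIntegral_univ_pi_det volume _ (fun p _ => f p)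
    fun p _ => (hf p).integrableOn_Icc]
  congr 1
  ext p q
  exact integral_Icc_eq_sub_of_hasDerivAt (hy q.castSucc_le_succ) (fun t _ => hF p t)
    (hf p).integrableOn_Icc

theorem monotone_of_mem_chainBox {n : ℕ} {w : Fin (n + 2) → ℝ} {y : Fin (n + 1) → ℝ}
    (hy : y ∈ chainBox w) : Monotone y :=
  Fin.monotone_iff_le_succ.2 fun q =>
    ((hy q.castSucc trivial).2.trans_eq (by rw [Fin.succ_castSucc])).trans (hy q.succ trivial).1

theorem chainBox_cons_snoc {k : ℕ} (x : Fin k → ℝ) (a b : ℝ) :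
    chainBox (Fin.cons a (Fin.snoc x b : Fin (k + 1) → ℝ) : Fin (k + 2) → ℝ) =
      univ.pi fun q : Fin (k + 1) =>
        Icc (if h : (q : ℕ) = 0 then a else x ⟨(q : ℕ) - 1, by omega⟩)
          (if h : (q : ℕ) = k then b else x ⟨(q : ℕ), by omega⟩) := by
  simp only [chainBox, Fin.cons_snoc_castSucc, Fin.cons_snoc_succ]

theorem hasDerivAt_neg_cos_mul_div {c : ℝ} (hc : c ≠ 0) (t : ℝ) :
    HasDerivAt (fun t => -Real.cos (c * t) / c) (Real.sin (c * t)) t := by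
  refine (((Real.hasDerivAt_cos (c * t)).comp t ((hasDerivAt_id t).const_mul c)).neg.div_const
    c).congr_deriv ?_
  field_simp

theorem hasDerivAt_neg_sin_mul_div_sq {c : ℝ} (hc : c ≠ 0) (t : ℝ) :
    HasDerivAt (fun t => -Real.sin (c * t) / c ^ 2) (-Real.cos (c * t) / c) t := by
  refine (((Real.hasDerivAt_sin (c * t)).comp t ((hasDerivAt_id t).const_mul c)).neg.div_const
    (c ^ 2)).congr_deriv ?_
  field_simp

theorem Real.pi_mul_natCast_ne_zero {n : ℕ} (hn : n ≠ 0) : Real.pi * n ≠ 0 :=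
  mul_ne_zero Real.pi_ne_zero (Nat.cast_ne_zero.2 hn)

section SineDeterminant

variable {k : ℕ} (jj : Fin k → ℕ)

noncomputable def borderedCos : Fin (k + 1) → ℝ → ℝ :=
  Fin.cons (fun _ => 1) fun p t => -Real.cos (Real.pi * jj p * t) / (Real.pi * jj p)

noncomputable def borderedSin : Fin (k + 1) → ℝ → ℝ :=
  Fin.cons id fun p t => -Real.sin (Real.pi * jj p * t) / (Real.pi * jj p) ^ 2

variable {jj}

theorem integral_chainBox_phiSin (hpos : ∀ p, 0 < jj p) {y : Fin (k + 1) → ℝ}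
    (hy : Monotone y) :
    ∫ t in chainBox y, phiSin k jj t = √2 ^ k * (of fun p q => borderedCos jj p (y q)).det := by
  rw [det_eq_det_sub_of_row_zero_eq_one _ fun q => rfl]
  simp only [phiSin, integral_const_mul]
  exact congrArg _ (integral_chainBox_det (fun p => by fun_prop)
    (fun p => hasDerivAt_neg_cos_mul_div (Real.pi_mul_natCast_ne_zero (hpos p).ne')) hy)

theorem integral_chainBox_det_borderedCos (hpos : ∀ p, 0 < jj p) {w : Fin (k + 2) → ℝ}
    (hw : Monotone w) (hw₀ : w 0 = 0) :
    ∫ y in chainBox w, (of fun p q => borderedCos jj p (y q)).det =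
      (of fun p q => borderedSin jj p (w q.succ)).det := by
  have hderiv (p : Fin (k + 1)) (t : ℝ) :
      HasDerivAt (borderedSin jj p) (borderedCos jj p t) t := by
    cases p using Fin.cases
    · simpa [borderedSin, borderedCos] using hasDerivAt_id t
    · simpa [borderedSin, borderedCos] using
        hasDerivAt_neg_sin_mul_div_sq (Real.pi_mul_natCast_ne_zero (hpos _).ne') t
  rw [integral_chainBox_det (fun p => by
    cases p using Fin.cases <;> simp [borderedCos] <;> fun_prop) hderiv hw]
  exact det_sub_castSucc_of_col_zero_eq_zero (of fun p q => borderedSin jj p (w q)) fun p => by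
    cases p using Fin.cases <;> simp [borderedSin, hw₀]

theorem det_borderedSin_cons_snoc (x : Fin k → ℝ) :
    (of fun p q => borderedSin jj p
        ((Fin.cons 0 (Fin.snoc x 1) : Fin (k + 2) → ℝ) q.succ)).det =
      (Real.pi ^ (2 * k) * ∏ p, (jj p : ℝ) ^ 2)⁻¹ *
        (of fun p q => Real.sin (Real.pi * jj p * x q)).det := by
  have hminor : ((of fun p q => borderedSin jj p
        ((Fin.cons 0 (Fin.snoc x 1) : Fin (k + 2) → ℝ) q.succ)).submatrix
          Fin.succ Fin.castSucc).det =
      (∏ p, -((Real.pi * jj p) ^ 2)⁻¹) *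
        (of fun p q => Real.sin (Real.pi * jj p * x q)).det := by
    rw [← det_mul_column]
    congr 1
    ext p q
    simp [borderedSin, div_eq_inv_mul]
  have hprod : ∏ p, -((Real.pi * jj p) ^ 2)⁻¹ =
      (-1) ^ k * (Real.pi ^ (2 * k) * ∏ p, (jj p : ℝ) ^ 2)⁻¹ := by
    simp [Finset.prod_neg, mul_pow, Finset.prod_mul_distrib, pow_mul]
  have hsign : ((-1 : ℝ) ^ k) * (-1) ^ k = 1 := by rw [← mul_pow, neg_one_mul, neg_neg, one_pow]
  rw [det_eq_of_col_last_succ_eq_zero _ fun p => ?_, hminor, hprod]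
  · simp only [of_apply, borderedSin, Fin.cons_zero, Fin.cons_succ, Fin.snoc_last, id]
    linear_combination (Real.pi ^ (2 * k) * ∏ p, (jj p : ℝ) ^ 2)⁻¹ *
      (of fun p q => Real.sin (Real.pi * jj p * x q)).det * hsign
  · simp [borderedSin, mul_comm Real.pi, Real.sin_nat_mul_pi]

end SineDeterminant

/-- **Eigenfunction equation for the `(2k+1)`-strip transfer operator `A∘B`.**
For `j_1 > … > j_k > 0` and `0 ≤ x_1 ≤ … ≤ x_k ≤ 1`, the iterated integral
`∫_{y_1=0}^{x_1} ⋯ ∫_{y_{k+1}=x_k}^{1} [ ∫_{t_1=y_1}^{y_2} ⋯ ∫_{t_k=y_k}^{y_{k+1}}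
φ(t) dt ] dy` (the outer integral is over a box since its limits are
constants; the inner one is over the box `∏ [y_q, y_{q+1}]`) equals
`φ(x) / (π^{2k} j_1² ⋯ j_k²)`. -/
theorem transfer_eigen_2kp1 (k : ℕ) (jj : Fin k → ℕ) (hpos : ∀ p, 0 < jj p)
    (x : Fin k → ℝ) (hmono : Monotone x) (h01 : ∀ q, 0 ≤ x q ∧ x q ≤ 1) :
    (∫ y in Set.univ.pi (fun q : Fin (k + 1) =>
        Set.Icc
          (if h : (q : ℕ) = 0 then (0 : ℝ)
            else x ⟨(q : ℕ) - 1, by have := q.isLt; omega⟩)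
          (if h : (q : ℕ) = k then (1 : ℝ)
            else x ⟨(q : ℕ), by have := q.isLt; omega⟩)),
        ∫ t in Set.univ.pi (fun q : Fin k => Set.Icc (y q.castSucc) (y q.succ)),
          phiSin k jj t) =
      (1 / (Real.pi ^ (2 * k) * ∏ p : Fin k, ((jj p : ℝ)) ^ 2)) * phiSin k jj x := by
  rw [← chainBox_cons_snoc]
  change ∫ y in chainBox _, ∫ t in chainBox y, _ = _
  have hw : Monotone (Fin.cons 0 (Fin.snoc x 1) : Fin (k + 2) → ℝ) :=
    Fin.monotone_cons_snoc hmono zero_le_one (fun q => (h01 q).1) (fun q => (h01 q).2)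
  rw [setIntegral_congr_fun (measurableSet_chainBox _) fun y hy =>
      integral_chainBox_phiSin hpos (monotone_of_mem_chainBox hy),
    integral_const_mul, integral_chainBox_det_borderedCos hpos hw rfl, det_borderedSin_cons_snoc,
    phiSin]
  ring
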